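/- For every x† ∈ N(A)^⊥, one has the estimate limsup_{n,m→∞} ‖x_{n,m} − x†‖ ≤ limsup_{n,m→∞} ‖A_{n,m}† A (I − P_n) x†‖, where x_{n,m} = A_{n,m}† A x†. -/

import Mathlib

open ContinuousLinearMap Filter Topology

noncomputable section

/-- Orthogonal projection onto a subspace, as an endomorphism. -/
noncomputable def proj {E : Type*} [NormedAddCommGroup E] [InnerProductSpace ℝ E]
    (K : Submodule ℝ E) [Submodule.HasOrthogonalProjection K] : E →L[ℝ] E :=
  K.subtypeL.comp (Submodule.orthogonalProjectionOnto K : E →L[ℝ] K)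

/-- The discretized operator `A_{n,m} = Q_m A P_n`. -/
noncomputable def Amn {X Y : Type*} [NormedAddCommGroup X] [InnerProductSpace ℝ X]
    [NormedAddCommGroup Y] [InnerProductSpace ℝ Y]
    (A : X →L[ℝ] Y) (Xn : Submodule ℝ X) (Ym : Submodule ℝ Y)
    [Submodule.HasOrthogonalProjection Xn] [Submodule.HasOrthogonalProjection Ym] : X →L[ℝ] Y :=
  (proj Ym).comp (A.comp (proj Xn))

/-- `B` is the Moore–Penrose pseudoinverse of `A` (the four Penrose conditions). -/
def IsPseudoinverse {X Y : Type*} [NormedAddCommGroup X] [InnerProductSpace ℝ X]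
    [CompleteSpace X] [NormedAddCommGroup Y] [InnerProductSpace ℝ Y] [CompleteSpace Y]
    (A : X →L[ℝ] Y) (B : Y →L[ℝ] X) : Prop :=
  A.comp (B.comp A) = A ∧ B.comp (A.comp B) = B ∧
  ContinuousLinearMap.adjoint (A.comp B) = A.comp B ∧
  ContinuousLinearMap.adjoint (B.comp A) = B.comp A

open scoped RealInnerProductSpace

section AuxProj

variable {E : Type*} [NormedAddCommGroup E] [InnerProductSpace ℝ E] [CompleteSpace E]

lemma proj_adjoint' (K : Submodule ℝ E) [Submodule.HasOrthogonalProjection K] [CompleteSpace K] :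
    ContinuousLinearMap.adjoint (_root_.proj K) = _root_.proj K := by
  have : IsSelfAdjoint (_root_.proj K) := isSelfAdjoint_starProjection K
  rwa [IsSelfAdjoint, star_eq_adjoint] at this

omit [CompleteSpace E] in
lemma proj_idem' (K : Submodule ℝ E) [Submodule.HasOrthogonalProjection K] (x : E) :
    _root_.proj K (_root_.proj K x) = _root_.proj K x := by
  exact Submodule.starProjection_eq_self_iff.mpr (Submodule.starProjection_apply_mem K x)

omit [CompleteSpace E] in
lemma norm_proj_le' (K : Submodule ℝ E) [Submodule.HasOrthogonalProjection K] (x : E) :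
    ‖_root_.proj K x‖ ≤ ‖x‖ := by
  have h := (K.orthogonalProjectionOnto).le_opNorm x
  calc ‖_root_.proj K x‖ = ‖K.orthogonalProjectionOnto x‖ := rfl
    _ ≤ ‖K.orthogonalProjectionOnto‖ * ‖x‖ := h
    _ ≤ 1 * ‖x‖ := by gcongr; exact Submodule.orthogonalProjectionOnto_norm_le K
    _ = ‖x‖ := one_mul _

end AuxProj

section AuxPinv

variable {X Y : Type*} [NormedAddCommGroup X] [InnerProductSpace ℝ X] [CompleteSpace X]
  [NormedAddCommGroup Y] [InnerProductSpace ℝ Y] [CompleteSpace Y]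

/-- For a pseudoinverse `B` of `M`, the distance from `v` to `B M v` is at most the
distance from `v` to any element of the range of `M*`. -/
lemma pinv_contraction {M : X →L[ℝ] Y} {B : Y →L[ℝ] X} (h : IsPseudoinverse M B)
    (v : X) (y : Y) :
    ‖v - B (M v)‖ ≤ ‖v - ContinuousLinearMap.adjoint M y‖ := by
  obtain ⟨h1, h2, h3, h4⟩ := h
  set T : X →L[ℝ] X := B ∘L M with hT
  have hTsa : ContinuousLinearMap.adjoint T = T := h4
  have hTid : ∀ x, T (T x) = T x := by
    intro x
    have := congrArg (fun L : X →L[ℝ] Y => B (L x)) h1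
    simpa [hT, comp_apply] using this
  set S : X →L[ℝ] X := ContinuousLinearMap.id ℝ X - T with hS
  have hSsa : ContinuousLinearMap.adjoint S = S := by
    rw [hS, map_sub, adjoint_id, hTsa]
  have hSid : ∀ x, S (S x) = S x := by
    intro x
    simp only [hS, ContinuousLinearMap.sub_apply, ContinuousLinearMap.id_apply, map_sub]
    rw [hTid]
    abel
  have hnorm : ∀ x, ‖S x‖ ≤ ‖x‖ := by
    intro x
    rcases eq_or_lt_of_le (norm_nonneg (S x)) with h0 | h0
    · rw [← h0]; exact norm_nonneg x
    · have hinner : (inner ℝ (S x) (S x) : ℝ) = (inner ℝ x (S x) : ℝ) := by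
        have e := ContinuousLinearMap.adjoint_inner_right S x (S x)
        rw [hSsa, hSid] at e
        exact e.symm
      have hle := real_inner_le_norm x (S x)
      nlinarith [real_inner_self_eq_norm_mul_norm (S x)]
  have hfix : T (ContinuousLinearMap.adjoint M y) = ContinuousLinearMap.adjoint M y := by
    have e1 : ContinuousLinearMap.adjoint (M.comp (B.comp M))
        = ContinuousLinearMap.adjoint M := by rw [h1]
    rw [ContinuousLinearMap.adjoint_comp, h4] at e1
    calc T (ContinuousLinearMap.adjoint M y)
        = ((B ∘L M) ∘L ContinuousLinearMap.adjoint M) y := rfl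
      _ = ContinuousLinearMap.adjoint M y := by rw [e1]
  have key : v - T v = S (v - ContinuousLinearMap.adjoint M y) := by
    simp only [hS, ContinuousLinearMap.sub_apply, ContinuousLinearMap.id_apply, map_sub]
    rw [hfix]
    abel
  have hTv : B (M v) = T v := rfl
  rw [hTv, key]
  exact hnorm _

/-- A pseudoinverse of `Amn A K L` kills the projection onto `L`. -/
lemma pinv_projY (A : X →L[ℝ] Y) (K : Submodule ℝ X) (L : Submodule ℝ Y)
    [Submodule.HasOrthogonalProjection K] [CompleteSpace K] [Submodule.HasOrthogonalProjection L] [CompleteSpace L]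
    {B : Y →L[ℝ] X} (h : IsPseudoinverse (Amn A K L) B) (y : Y) :
    B (_root_.proj L y) = B y := by
  obtain ⟨h1, h2, h3, h4⟩ := h
  set M : X →L[ℝ] Y := Amn A K L with hM
  have hMQ : ∀ z, ContinuousLinearMap.adjoint M (_root_.proj L z)
      = ContinuousLinearMap.adjoint M z := by
    intro z
    have hMadj : ContinuousLinearMap.adjoint M
        = (ContinuousLinearMap.adjoint (A ∘L _root_.proj K)) ∘L _root_.proj L := by
      rw [hM, Amn, ContinuousLinearMap.adjoint_comp, proj_adjoint']
    rw [hMadj]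
    simp only [comp_apply]
    rw [proj_idem']
  have hB : ∀ z, B z = B (ContinuousLinearMap.adjoint B (ContinuousLinearMap.adjoint M z)) := by
    intro z
    have h3' : M ∘L B = (ContinuousLinearMap.adjoint B) ∘L (ContinuousLinearMap.adjoint M) := by
      conv_lhs => rw [← h3]
      rw [ContinuousLinearMap.adjoint_comp]
    conv_lhs => rw [← h2]
    calc (B.comp (M.comp B)) z = B ((M ∘L B) z) := rfl
      _ = B (ContinuousLinearMap.adjoint B (ContinuousLinearMap.adjoint M z)) := by rw [h3']; rfl
  rw [hB (_root_.proj L y), hMQ, ← hB]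

/-- Membership in `(ker A)ᗮ` gives membership in the closure of the range of the adjoint. -/
lemma mem_closure_range_adjoint (A : X →L[ℝ] Y) {x : X} (hx : x ∈ (LinearMap.ker (A : X →ₗ[ℝ] Y))ᗮ) :
    x ∈ closure ((LinearMap.range (ContinuousLinearMap.adjoint A : Y →ₗ[ℝ] X) : Submodule ℝ X) : Set X) := by
  have hker : (LinearMap.range (ContinuousLinearMap.adjoint A : Y →ₗ[ℝ] X))ᗮ = LinearMap.ker (A : X →ₗ[ℝ] Y) := by
    ext u
    simp only [Submodule.mem_orthogonal, LinearMap.mem_ker]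
    constructor
    · intro h
      have h2 : ∀ y : Y, (inner ℝ y (A u) : ℝ) = 0 := fun y => by
        rw [← ContinuousLinearMap.adjoint_inner_left]
        exact h _ ⟨y, rfl⟩
      have := h2 (A u)
      rwa [inner_self_eq_zero] at this
    · intro h w hw
      obtain ⟨y, rfl⟩ := hw
      simp only [ContinuousLinearMap.coe_coe] at h ⊢
      rw [ContinuousLinearMap.adjoint_inner_left, h, inner_zero_right]
  rw [← hker, Submodule.orthogonal_orthogonal_eq_closure] at hx
  rwa [← SetLike.mem_coe, Submodule.topologicalClosure_coe] at hx

end AuxPinv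

/-- for every `x† ∈ N(A)ᗮ`,
`limsup ‖x_{n,m} − x†‖ ≤ limsup ‖A_{n,m}† A (I − P_n) x†‖` (limsups in `ℝ≥0∞`). -/
theorem stmt_13 {X Y : Type*} [NormedAddCommGroup X] [InnerProductSpace ℝ X] [CompleteSpace X]
    [NormedAddCommGroup Y] [InnerProductSpace ℝ Y] [CompleteSpace Y]
    (A : X →L[ℝ] Y) (Xn : ℕ → Submodule ℝ X) (Ym : ℕ → Submodule ℝ Y)
    [∀ n, FiniteDimensional ℝ (Xn n)] [∀ m, FiniteDimensional ℝ (Ym m)]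
    (hX : Monotone Xn) (hY : Monotone Ym)
    (hdX : Dense (↑(⨆ n, Xn n) : Set X)) (hdY : Dense (↑(⨆ m, Ym m) : Set Y))
    (Adag : ℕ → ℕ → (Y →L[ℝ] X))
    (hdag : ∀ n m, IsPseudoinverse (Amn A (Xn n) (Ym m)) (Adag n m)) :
    ∀ xd ∈ (LinearMap.ker (A : X →ₗ[ℝ] Y))ᗮ,
      Filter.limsup (fun p : ℕ × ℕ => (‖Adag p.1 p.2 (A xd) - xd‖₊ : ENNReal)) atTop ≤
      Filter.limsup (fun p : ℕ × ℕ =>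
        (‖Adag p.1 p.2 (A (xd - proj (Xn p.1) xd))‖₊ : ENNReal)) atTop := by
  intro xd hxd
  set Aad : Y →L[ℝ] X := ContinuousLinearMap.adjoint A with hAad
  -- adjoint of the discretized operator, pointwise
  have hadjA : ∀ (n m : ℕ) (z : Y),
      ContinuousLinearMap.adjoint (Amn A (Xn n) (Ym m)) z
        = _root_.proj (Xn n) (Aad (_root_.proj (Ym m) z)) := by
    intro n m z
    rw [Amn, ContinuousLinearMap.adjoint_comp, ContinuousLinearMap.adjoint_comp,
      proj_adjoint', proj_adjoint']
    rfl
  -- the "gap" term tends to zero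
  have hgap : Tendsto
      (fun p : ℕ × ℕ => ‖xd - Adag p.1 p.2 (Amn A (Xn p.1) (Ym p.2) xd)‖) atTop (𝓝 0) := by
    have hxcl := mem_closure_range_adjoint A hxd
    rw [Metric.tendsto_nhds]
    intro ε hε
    have hε3 : 0 < ε / 3 := by linarith
    obtain ⟨w, hw, hwd⟩ := Metric.mem_closure_iff.mp hxcl (ε / 3) hε3
    rw [SetLike.mem_coe] at hw
    obtain ⟨y, rfl⟩ := LinearMap.mem_range.mp hw
    have hclX : ⊤ ≤ (⨆ n, Xn n).topologicalClosure :=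
      (Submodule.dense_iff_topologicalClosure_eq_top.mp hdX).ge
    have hclY : ⊤ ≤ (⨆ m, Ym m).topologicalClosure :=
      (Submodule.dense_iff_topologicalClosure_eq_top.mp hdY).ge
    have hPn : Tendsto (fun n => ‖Aad y - _root_.proj (Xn n) (Aad y)‖) atTop (𝓝 0) := by
      have h0 := Submodule.starProjection_tendsto_self Xn hX (Aad y) hclX
      have h2 : Tendsto (fun n => Aad y - _root_.proj (Xn n) (Aad y)) atTop
          (𝓝 (Aad y - Aad y)) := tendsto_const_nhds.sub h0
      rw [sub_self] at h2
      simpa using h2.norm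
    have hQm : Tendsto (fun m => ‖Aad (y - _root_.proj (Ym m) y)‖) atTop (𝓝 0) := by
      have h0 := Submodule.starProjection_tendsto_self Ym hY y hclY
      have h1 : Tendsto (fun m => y - _root_.proj (Ym m) y) atTop (𝓝 (y - y)) :=
        tendsto_const_nhds.sub h0
      rw [sub_self] at h1
      have h2 : Tendsto (fun m => Aad (y - _root_.proj (Ym m) y)) atTop (𝓝 (Aad 0)) :=
        (Aad.continuous.tendsto 0).comp h1
      rw [map_zero] at h2
      simpa using h2.norm
    have hev1 : ∀ᶠ n in atTop, ‖Aad y - _root_.proj (Xn n) (Aad y)‖ < ε / 3 :=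
      hPn.eventually_lt_const hε3
    have hev2 : ∀ᶠ m in atTop, ‖Aad (y - _root_.proj (Ym m) y)‖ < ε / 3 :=
      hQm.eventually_lt_const hε3
    have hev : ∀ᶠ p : ℕ × ℕ in atTop,
        ‖Aad y - _root_.proj (Xn p.1) (Aad y)‖ < ε / 3 ∧
        ‖Aad (y - _root_.proj (Ym p.2) y)‖ < ε / 3 := by
      rw [← prod_atTop_atTop_eq]
      exact (hev1.prod_inl _).and (hev2.prod_inr _)
    filter_upwards [hev] with p hp
    rw [Real.dist_eq, sub_zero, abs_of_nonneg (norm_nonneg _)]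
    have hstep1 : ‖xd - Adag p.1 p.2 (Amn A (Xn p.1) (Ym p.2) xd)‖
        ≤ ‖xd - _root_.proj (Xn p.1) (Aad (_root_.proj (Ym p.2) y))‖ := by
      have := pinv_contraction (hdag p.1 p.2) xd y
      rwa [hadjA] at this
    have htri : ‖xd - _root_.proj (Xn p.1) (Aad (_root_.proj (Ym p.2) y))‖
        ≤ ‖xd - Aad y‖ + ‖Aad y - _root_.proj (Xn p.1) (Aad y)‖ +
          ‖_root_.proj (Xn p.1) (Aad y) - _root_.proj (Xn p.1) (Aad (_root_.proj (Ym p.2) y))‖ := by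
      have t := dist_triangle4 xd (Aad y) (_root_.proj (Xn p.1) (Aad y))
        (_root_.proj (Xn p.1) (Aad (_root_.proj (Ym p.2) y)))
      simpa [dist_eq_norm] using t
    have hlast : ‖_root_.proj (Xn p.1) (Aad y)
          - _root_.proj (Xn p.1) (Aad (_root_.proj (Ym p.2) y))‖
        ≤ ‖Aad (y - _root_.proj (Ym p.2) y)‖ := by
      have he : _root_.proj (Xn p.1) (Aad y) - _root_.proj (Xn p.1) (Aad (_root_.proj (Ym p.2) y))
          = _root_.proj (Xn p.1) (Aad (y - _root_.proj (Ym p.2) y)) := by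
        rw [map_sub, map_sub]
      rw [he]
      exact norm_proj_le' _ _
    have hdist : ‖xd - Aad y‖ < ε / 3 := by
      rw [← dist_eq_norm]; exact hwd
    calc ‖xd - Adag p.1 p.2 (Amn A (Xn p.1) (Ym p.2) xd)‖
        ≤ ‖xd - Aad y‖ + ‖Aad y - _root_.proj (Xn p.1) (Aad y)‖ +
          ‖_root_.proj (Xn p.1) (Aad y)
            - _root_.proj (Xn p.1) (Aad (_root_.proj (Ym p.2) y))‖ := hstep1.trans htri
      _ < ε / 3 + ε / 3 + ε / 3 := by
          have := hp.1; have := hp.2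
          have := hlast
          linarith
      _ = ε := by ring
  -- now the limsup estimate
  apply ENNReal.le_of_forall_pos_le_add
  intro ε hε _
  have hevg : ∀ᶠ p : ℕ × ℕ in atTop,
      ‖xd - Adag p.1 p.2 (Amn A (Xn p.1) (Ym p.2) xd)‖ < (ε : ℝ) :=
    hgap.eventually_lt_const (by exact_mod_cast hε)
  have hev : ∀ᶠ p : ℕ × ℕ in atTop,
      (‖Adag p.1 p.2 (A xd) - xd‖₊ : ENNReal)
        ≤ (‖Adag p.1 p.2 (A (xd - _root_.proj (Xn p.1) xd))‖₊ : ENNReal) + ε := by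
    filter_upwards [hevg] with p hp
    have h1 : Adag p.1 p.2 (Amn A (Xn p.1) (Ym p.2) xd)
        = Adag p.1 p.2 (A (_root_.proj (Xn p.1) xd)) := by
      have hpp := pinv_projY A (Xn p.1) (Ym p.2) (hdag p.1 p.2) (A (_root_.proj (Xn p.1) xd))
      calc Adag p.1 p.2 (Amn A (Xn p.1) (Ym p.2) xd)
          = Adag p.1 p.2 (_root_.proj (Ym p.2) (A (_root_.proj (Xn p.1) xd))) := rfl
        _ = Adag p.1 p.2 (A (_root_.proj (Xn p.1) xd)) := hpp
    have hdec : Adag p.1 p.2 (A xd) - xd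
        = (Adag p.1 p.2 (Amn A (Xn p.1) (Ym p.2) xd) - xd)
          + Adag p.1 p.2 (A (xd - _root_.proj (Xn p.1) xd)) := by
      rw [h1, map_sub, map_sub]
      abel
    have hb1 : (‖Adag p.1 p.2 (Amn A (Xn p.1) (Ym p.2) xd) - xd‖₊ : ENNReal) ≤ (ε : ENNReal) := by
      rw [ENNReal.coe_le_coe, ← NNReal.coe_le_coe, coe_nnnorm]
      rw [norm_sub_rev]
      exact hp.le
    calc (‖Adag p.1 p.2 (A xd) - xd‖₊ : ENNReal)
        ≤ (‖Adag p.1 p.2 (Amn A (Xn p.1) (Ym p.2) xd) - xd‖₊ : ENNReal)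
          + (‖Adag p.1 p.2 (A (xd - _root_.proj (Xn p.1) xd))‖₊ : ENNReal) := by
          rw [hdec, ← ENNReal.coe_add, ENNReal.coe_le_coe]
          exact nnnorm_add_le _ _
      _ ≤ (ε : ENNReal) + (‖Adag p.1 p.2 (A (xd - _root_.proj (Xn p.1) xd))‖₊ : ENNReal) := by
          gcongr
      _ = (‖Adag p.1 p.2 (A (xd - _root_.proj (Xn p.1) xd))‖₊ : ENNReal) + ε := add_comm _ _
  calc Filter.limsup (fun p : ℕ × ℕ => (‖Adag p.1 p.2 (A xd) - xd‖₊ : ENNReal)) atTop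
      ≤ Filter.limsup (fun p : ℕ × ℕ =>
          (‖Adag p.1 p.2 (A (xd - _root_.proj (Xn p.1) xd))‖₊ : ENNReal) + ε) atTop :=
        Filter.limsup_le_limsup hev
    _ = Filter.limsup (fun p : ℕ × ℕ =>
          (‖Adag p.1 p.2 (A (xd - _root_.proj (Xn p.1) xd))‖₊ : ENNReal)) atTop + ε := by
        apply limsup_add_const
        · exact Filter.isBoundedUnder_of ⟨⊤, fun p => le_top⟩
        · exact ⟨0, fun a _ => zero_le⟩
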